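/- arXiv:2106.12249 — 3 statements merged into one kernel-verified Lean document; each statement's English description precedes it below -/
import Mathlib

section
/- If b_h ≺° b_j for b_h, b_j ∈ B, then there exists a sequence of distinct indices q_1, q_2, …, q_p with q_1 = h and q_p = j such that for each 1 ≤ r ≤ p−1, b_{q_r} is either a basis of b_{q_{r+1}} or a q_{r+1}-descendant of a basis of b_{q_{r+1}}. -/
open Sum

/-- The relation `≺°` generated by the rules (O), (A), (TB), (FB), (T). -/
inductive Prec (n : ℕ) (β : Type) (E : Fin n → β → Prop) (k : β → Fin n) :
    (Fin n ⊕ β) → (Fin n ⊕ β) → Prop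
  | O : ∀ {i j : Fin n}, i < j → Prec n β E k (inl i) (inl j)
  | A : ∀ {t : Fin n} {j : β}, E t j → Prec n β E k (inl t) (inr j)
  | TB : ∀ {s t : Fin n} {h j : β}, s < t → t < k j → E s j → ¬ E t j → E t h →
      Prec n β E k (inr h) (inr j)
  | FB : ∀ {t : Fin n} {w h j : β}, Prec n β E k (inr w) (inr j) → k j < t → E t w →
      E t h → Prec n β E k (inr h) (inr j)
  | T : ∀ {p q r : Fin n ⊕ β}, Prec n β E k p q → Prec n β E k q r → Prec n β E k p r
/-- `b_h` is a basis of `b_j`: there are `s < t < k_j` with `a_s b_j ∈ E`, `a_t b_j ∉ E`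
and `a_t b_h ∈ E`. -/
def IsBasis (n : ℕ) (β : Type) (E : Fin n → β → Prop) (k : β → Fin n) (h j : β) : Prop :=
  ∃ s t : Fin n, s < t ∧ t < k j ∧ E s j ∧ ¬ E t j ∧ E t h

/-- `b_h` is a `j`-descendant of `b_w`: a chain `b_w = b_{u_1}, …, b_{u_g} = b_h` (g ≥ 2)
where consecutive elements have a common neighbor `a_t` with `t > k_j`. -/
def IsDescendant (n : ℕ) (β : Type) (E : Fin n → β → Prop) (k : β → Fin n)
    (j w h : β) : Prop :=
  Relation.TransGen (fun w' h' => ∃ t : Fin n, k j < t ∧ E t w' ∧ E t h') w h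

/-!
Write `b_y ⊴ b_j` when `b_y` is a basis of `b_j` or a `j`-descendant of one. Putting `A` (ordered
by `<`) below `B` (ordered by the transitive closure of `⊴`) gives a transitive relation that
obviously contains the rules (O), (A), (TB); the point is rule (FB). Suppose `b_x` reaches `b_j`
through `⊴`, `b_x` has a neighbour `a_r` with `r ≥ t > k_j`, and `b_y` meets `a_t`. Follow the
chain `b_x ⊴ b_z ⊴ ⋯ ⊴ b_j` while `t ≤ k_z` (then `a_{k_z}` is the next such neighbour); it stops
before `b_j`, at some `b_x ⊴ b_z` with `k_z < t`. Walking back along the descendant chain behind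
`b_x ⊴ b_z` either meets `a_t`, making `b_y` a `z`-descendant of the same basis, or finds a vertex
`b_w ⊴ b_z` of which `b_y` is a basis. Cutting out loops makes the resulting chain injective.
-/

open Relation

theorem List.exists_nodup_isChain_cons_of_reflTransGen {α : Type*} {r : α → α → Prop} {a b : α}
    (h : ReflTransGen r a b) :
    ∃ l : List α, (a :: l).Nodup ∧ (a :: l).IsChain r ∧
      (a :: l).getLast (List.cons_ne_nil _ _) = b := by
  induction h using ReflTransGen.head_induction_on with
  | refl => exact ⟨[], List.nodup_singleton _, List.isChain_singleton _, rfl⟩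
  | @head a c hac _ ih =>
    obtain ⟨l, hnd, hch, hlast⟩ := ih
    by_cases ha : a ∈ c :: l
    · obtain ⟨s, t, hst⟩ := List.append_of_mem ha
      rw [hst] at hnd hch
      refine ⟨t, hnd.sublist (List.sublist_append_right _ _), hch.right_of_append, ?_⟩
      simpa only [hst, List.getLast_append_of_ne_nil _ (List.cons_ne_nil a t)] using hlast
    · exact ⟨c :: l, List.nodup_cons.2 ⟨ha, hnd⟩, List.isChain_cons_cons.2 ⟨hac, hch⟩,
      by rw [List.getLast_cons]; exact hlast⟩

theorem Relation.ReflTransGen.exists_injective_path {α : Type*} {r : α → α → Prop} {a b : α}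
    (h : ReflTransGen r a b) :
    ∃ (p : ℕ) (q : Fin (p + 1) → α), Function.Injective q ∧ q 0 = a ∧ q (Fin.last p) = b ∧
      ∀ i : Fin p, r (q i.castSucc) (q i.succ) := by
  obtain ⟨l, hnd, hch, hlast⟩ := List.exists_nodup_isChain_cons_of_reflTransGen h
  refine ⟨l.length, (a :: l).get, List.nodup_iff_injective_get.1 hnd, rfl, ?_,
    fun i => List.isChain_iff_getElem.1 hch i (by simp)⟩
  rw [← hlast, List.getLast_eq_getElem]
  rfl

section

variable {n : ℕ} {β : Type} {E : Fin n → β → Prop} {k : β → Fin n}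

def SharesNeighborAbove (E : Fin n → β → Prop) (k : β → Fin n) (j x y : β) : Prop :=
  ∃ t : Fin n, k j < t ∧ E t x ∧ E t y

def IsBasisOrDescendant (E : Fin n → β → Prop) (k : β → Fin n) (h j : β) : Prop :=
  IsBasis n β E k h j ∨ ∃ v : β, IsBasis n β E k v j ∧ IsDescendant n β E k j v h

theorem isBasisOrDescendant_iff {h j : β} :
    IsBasisOrDescendant E k h j ↔
      ∃ v : β, IsBasis n β E k v j ∧ ReflTransGen (SharesNeighborAbove E k j) v h := by
  constructor
  · rintro (hb | ⟨v, hb, hd⟩)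
    exacts [⟨h, hb, .refl⟩, ⟨v, hb, hd.to_reflTransGen⟩]
  · rintro ⟨v, hb, hd⟩
    rcases reflTransGen_iff_eq_or_transGen.1 hd with rfl | hd
    exacts [.inl hb, .inr ⟨v, hb, hd⟩]

/-- Walk back from `x` along its descendant chain, keeping a neighbour `a_r` with `r ≥ t` of the
current vertex. Either that vertex meets `a_t`, or `a_t` lies strictly between `a_r` and a smaller
neighbour of it (shared with its predecessor, or the one making `v` a basis of `b_z`). -/
theorem IsBasisOrDescendant.transGen_of_le_neighbor (hmax : ∀ j i, E i j → i ≤ k j)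
    {x y z : β} {t r : Fin n} (hxz : IsBasisOrDescendant E k x z) (hzt : k z < t) (hty : E t y)
    (htr : t ≤ r) (hrx : E r x) : TransGen (IsBasisOrDescendant E k) y z := by
  obtain ⟨v, hv, hvx⟩ := isBasisOrDescendant_iff.1 hxz
  clear hxz
  induction hvx generalizing r with
  | refl =>
    by_cases htv : E t v
    · exact .single (.inr ⟨v, hv, .single ⟨t, hzt, htv, hty⟩⟩)
    · have hvz : IsBasisOrDescendant E k v z := .inl hv
      obtain ⟨-, u, -, huz, -, -, huv⟩ := hv
      have htk : t < k v := (lt_of_le_of_ne htr fun h => htv (h ▸ hrx)).trans_le (hmax v r hrx)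
      exact .head (.inl ⟨u, t, huz.trans hzt, htk, huv, htv, hty⟩) (.single hvz)
  | @tail w x hvw hwx ih =>
    have hxz : IsBasisOrDescendant E k x z := isBasisOrDescendant_iff.2 ⟨v, hv, hvw.tail hwx⟩
    by_cases htx : E t x
    · exact .single (isBasisOrDescendant_iff.2 ⟨v, hv, hvw.tail hwx |>.tail ⟨t, hzt, htx, hty⟩⟩)
    obtain ⟨r', -, hr'w, hr'x⟩ := hwx
    by_cases hr't : r' < t
    · have htk : t < k x := (lt_of_le_of_ne htr fun h => htx (h ▸ hrx)).trans_le (hmax x r hrx)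
      exact .head (.inl ⟨r', t, hr't, htk, hr'x, htx, hty⟩) (.single hxz)
    · exact ih (not_lt.1 hr't) hr'w

theorem Relation.ReflTransGen.transGen_isBasisOrDescendant_of_le_neighbor (hmem : ∀ j, E (k j) j)
    (hmax : ∀ j i, E i j → i ≤ k j) {x y j : β} {t r : Fin n}
    (hxj : ReflTransGen (IsBasisOrDescendant E k) x j) (hjt : k j < t) (hty : E t y)
    (htr : t ≤ r) (hrx : E r x) : TransGen (IsBasisOrDescendant E k) y j := by
  induction hxj using ReflTransGen.head_induction_on generalizing r with
  | refl => exact absurd (hmax j r hrx) (not_le.2 (hjt.trans_le htr))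
  | @head x z hxz hzj ih =>
    by_cases htz : t ≤ k z
    · exact ih htz (hmem z)
    · exact (hxz.transGen_of_le_neighbor hmax (not_le.1 htz) hty htr hrx).trans_left hzj

theorem Prec.lex_transGen_isBasisOrDescendant (hmem : ∀ j, E (k j) j)
    (hmax : ∀ j i, E i j → i ≤ k j) {a b : Fin n ⊕ β} (hab : Prec n β E k a b) :
    Sum.Lex (· < ·) (TransGen (IsBasisOrDescendant E k)) a b := by
  induction hab with
  | O hij => exact .inl hij
  | A _ => exact .sep _ _
  | TB hst htk hsj hnt hth => exact .inr (.single (.inl ⟨_, _, hst, htk, hsj, hnt, hth⟩))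
  | FB _ hjt htw hth ih =>
    exact .inr ((Sum.lex_inr_inr.1 ih).to_reflTransGen.transGen_isBasisOrDescendant_of_le_neighbor
      hmem hmax hjt hth le_rfl htw)
  | T _ _ ih₁ ih₂ => exact _root_.trans ih₁ ih₂

end

theorem stmt4_general (n : ℕ) (β : Type) (E : Fin n → β → Prop) (k : β → Fin n)
    (hk : ∀ j : β, E (k j) j ∧ ∀ i : Fin n, E i j → i ≤ k j)
    (h j : β) (hhj : Prec n β E k (inr h) (inr j)) :
    ∃ (p : ℕ) (q : Fin (p + 1) → β), Function.Injective q ∧ q 0 = h ∧ q (Fin.last p) = j ∧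
      ∀ r : Fin p,
        IsBasis n β E k (q r.castSucc) (q r.succ) ∨
        ∃ v : β, IsBasis n β E k v (q r.succ) ∧
          IsDescendant n β E k (q r.succ) v (q r.castSucc) :=
  (Sum.lex_inr_inr.1 (hhj.lex_transGen_isBasisOrDescendant (fun j => (hk j).1)
    (fun j => (hk j).2))).to_reflTransGen.exists_injective_path

/-- If `b_h ≺° b_j` then there is a sequence of distinct `B`-vertices
`b_{q_1} = b_h, …, b_{q_p} = b_j` such that each `b_{q_r}` is either a basis of `b_{q_{r+1}}`
or a `q_{r+1}`-descendant of a basis of `b_{q_{r+1}}`. -/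
theorem stmt4 (n : ℕ) (β : Type) [Fintype β] (E : Fin n → β → Prop) (k : β → Fin n)
    (hk : ∀ j : β, E (k j) j ∧ ∀ i : Fin n, E i j → i ≤ k j)
    (h j : β) (hhj : Prec n β E k (inr h) (inr j)) :
    ∃ (p : ℕ) (q : Fin (p + 1) → β), Function.Injective q ∧ q 0 = h ∧ q (Fin.last p) = j ∧
      ∀ r : Fin p,
        IsBasis n β E k (q r.castSucc) (q r.succ) ∨
        ∃ v : β, IsBasis n β E k v (q r.succ) ∧
          IsDescendant n β E k (q r.succ) v (q r.castSucc) :=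
  stmt4_general n β E k hk h j hhj
end

section
/- G admits an A-Stick order if and only if the relation ≺° generated by the rules of R (equivalently, by the rules of R') is irreflexive, i.e. is a strict partial order (equivalently: there are no vertices c, d with both c ≺° d and d ≺° c). -/
/-!
Every A-Stick order contains `≺°`: each instance of (TB) or (FB) is forced because the other
order of the two `B`-vertices would create the forbidden pattern `a' ≺ a ≺ b ≺ b'`.
Conversely, `≺°` is closed under that pattern (for `a > k_j` through the derived rule (FB')),
so every strict total order containing `≺°` in which `a_i` precedes `b` only when `a_i ≺° b` is
an A-Stick order. If `≺°` is irreflexive such an order exists: put `a_i` at level `2i + 1` and `b`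
at twice the number of `a_i ≺° b`, and extend `≺°` together with these levels linearly.
-/

open Sum

/-- A Stick order for `G = (A ∪ B, E)`: a linear (strict total) order on `A ∪ B` such that
every `A`-endpoint of an edge precedes its `B`-endpoint, and there is no forbidden
configuration `a' ≺ a ≺ b ≺ b'` with `a'b ∈ E`, `ab' ∈ E`, `ab ∉ E`. -/
def IsStickOrder (n : ℕ) (β : Type) (E : Fin n → β → Prop)
    (r : (Fin n ⊕ β) → (Fin n ⊕ β) → Prop) : Prop :=
  IsStrictTotalOrder (Fin n ⊕ β) r ∧
  (∀ (a : Fin n) (b : β), E a b → r (inl a) (inr b)) ∧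
  ¬ ∃ (a a' : Fin n) (b b' : β),
      r (inl a') (inl a) ∧ r (inl a) (inr b) ∧ r (inr b) (inr b') ∧
      E a' b ∧ E a b' ∧ ¬ E a b

/-- An A-Stick order: a Stick order whose restriction to `A` is the given order. -/
def IsAStickOrder (n : ℕ) (β : Type) (E : Fin n → β → Prop)
    (r : (Fin n ⊕ β) → (Fin n ⊕ β) → Prop) : Prop :=
  IsStickOrder n β E r ∧ ∀ i j : Fin n, r (inl i) (inl j) ↔ i < j

open Finset

theorem exists_isStrictTotalOrder_le {α : Type*} (r : α → α → Prop) [IsStrictOrder α r] :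
    ∃ s : α → α → Prop, IsStrictTotalOrder α s ∧ r ≤ s := by
  let := partialOrderOfSO r
  refine ⟨fun x y => toLinearExtension x < toLinearExtension y,
    inferInstanceAs (IsStrictTotalOrder (LinearExtension α) (· < ·)), fun x y hxy => ?_⟩
  exact lt_of_le_of_ne (toLinearExtension.monotone (le_of_lt hxy)) (ne_of_lt hxy : x ≠ y)

theorem Fin.val_lt_card_iff_mem_of_isLowerSet {n : ℕ} {s : Finset (Fin n)}
    (hs : IsLowerSet (s : Set (Fin n))) (i : Fin n) : (i : ℕ) < s.card ↔ i ∈ s := by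
  constructor
  · intro hi
    by_contra his
    have hsub : s ⊆ Iio i := fun j hj => mem_Iio.2 (lt_of_not_ge fun hij => his (hs hij hj))
    have := card_le_card hsub
    rw [Fin.card_Iio] at this
    omega
  · intro his
    have hsub : Iic i ⊆ s := fun j hj => hs (mem_Iic.1 hj) his
    have := card_le_card hsub
    rw [Fin.card_Iic] at this
    omega

namespace Prec

variable {n : ℕ} {β : Type} {E : Fin n → β → Prop} {k : β → Fin n}

theorem eq_inl_of_right_inl {x : Fin n ⊕ β} {j : Fin n} (h : Prec n β E k x (inl j)) :
    ∃ i < j, x = inl i := by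
  generalize hy : (inl j : Fin n ⊕ β) = y at h
  induction h generalizing j with
  | O hij => cases hy; exact ⟨_, hij, rfl⟩
  | A | TB | FB => cases hy
  | T _ _ ih₁ ih₂ =>
    obtain ⟨m, hmj, rfl⟩ := ih₂ hy
    obtain ⟨i, him, rfl⟩ := ih₁ rfl
    exact ⟨i, him.trans hmj, rfl⟩

theorem inl_inl_iff {i j : Fin n} : Prec n β E k (inl i) (inl j) ↔ i < j :=
  ⟨fun h => by obtain ⟨_, hij, ⟨⟩⟩ := h.eq_inl_of_right_inl; exact hij, O⟩

theorem not_inr_inl {b : β} {i : Fin n} : ¬ Prec n β E k (inr b) (inl i) := fun h => by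
  obtain ⟨_, _, ⟨⟩⟩ := h.eq_inl_of_right_inl

theorem inl_inr_of_le {i j : Fin n} {b : β} (hij : i ≤ j) (h : Prec n β E k (inl j) (inr b)) :
    Prec n β E k (inl i) (inr b) := by
  rcases hij.lt_or_eq with hij | rfl
  · exact T (O hij) h
  · exact h

theorem exists_edge_of_inl_inr {t : Fin n} {j : β} (h : Prec n β E k (inl t) (inr j)) :
    ∃ t' w, t ≤ t' ∧ E t' w ∧ (w = j ∨ Prec n β E k (inr w) (inr j)) := by
  generalize hx : (inl t : Fin n ⊕ β) = x at h
  generalize hy : (inr j : Fin n ⊕ β) = y at h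
  induction h generalizing t j with
  | O => cases hy
  | TB | FB => cases hx
  | A hE => cases hx; cases hy; exact ⟨_, _, le_rfl, hE, Or.inl rfl⟩
  | @T _ q _ h₁ h₂ ih₁ ih₂ =>
    subst hx hy
    cases q with
    | inl m =>
      obtain ⟨t', w, hmt', hE, hwj⟩ := ih₂ rfl rfl
      exact ⟨t', w, (inl_inl_iff.1 h₁).le.trans hmt', hE, hwj⟩
    | inr v =>
      obtain ⟨t', w, htt', hE, rfl | hwv⟩ := ih₁ rfl rfl
      · exact ⟨t', w, htt', hE, Or.inr h₂⟩
      · exact ⟨t', w, htt', hE, Or.inr (T hwv h₂)⟩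

section Rules

variable (hk : ∀ j : β, E (k j) j ∧ ∀ i : Fin n, E i j → i ≤ k j)
include hk

theorem FB_of_span {s t : Fin n} {w j h : β} (hwj : Prec n β E k (inr w) (inr j))
    (hjt : k j < t) (hs : E s w) (hst : s ≤ t) (htw : t ≤ k w) (hth : E t h) :
    Prec n β E k (inr h) (inr j) := by
  by_cases hE : E t w
  · exact FB hwj hjt hE hth
  · have hst' : s < t := hst.lt_of_ne (by rintro rfl; exact hE hs)
    have htw' : t < k w := htw.lt_of_ne (by rintro rfl; exact hE (hk w).1)
    exact T (TB hst' htw' hs hE hth) hwj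

theorem FB_of_le_k {t : Fin n} {w j h : β} (hwj : Prec n β E k (inr w) (inr j))
    (hjt : k j < t) (htw : t ≤ k w) (hth : E t h) : Prec n β E k (inr h) (inr j) := by
  generalize hx : (inr w : Fin n ⊕ β) = x at hwj
  generalize hy : (inr j : Fin n ⊕ β) = y at hwj
  induction hwj generalizing w j t with
  | O | A => cases hx
  | TB hsu huj hsj hnuj huw =>
    cases hx; cases hy
    exact FB_of_span hk (TB hsu huj hsj hnuj huw) hjt huw (huj.trans hjt).le htw hth
  | @FB u w' _ _ hw'j hju huw' huw ih =>
    cases hx; cases hy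
    rcases le_or_gt t u with htu | hut
    · exact ih hjt (htu.trans ((hk w').2 u huw')) hth rfl rfl
    · exact FB_of_span hk (FB hw'j hju huw' huw) hjt huw hut.le htw hth
  | @T _ q _ h₁ h₂ ih₁ ih₂ =>
    subst hx hy
    cases q with
    | inl m => exact absurd h₁ not_inr_inl
    | inr v =>
      rcases lt_or_ge (k v) t with hvt | htv
      · exact T (ih₁ hvt htw hth rfl rfl) h₂
      · exact ih₂ hjt htv hth rfl rfl

/-- The rule (FB') is admissible; as (FB) is a special case of it, `R'` generates the same
relation as `R`. -/
theorem FB' {t : Fin n} {j h : β} (htj : Prec n β E k (inl t) (inr j)) (hjt : k j < t)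
    (hth : E t h) : Prec n β E k (inr h) (inr j) := by
  obtain ⟨t', w, htt', hE, rfl | hwj⟩ := htj.exists_edge_of_inl_inr
  · exact absurd ((hk w).2 t' hE) (not_le.2 (hjt.trans_le htt'))
  · exact FB_of_le_k hk hwj hjt (htt'.trans ((hk w).2 t' hE)) hth

theorem inr_inr_of_forbidden {a a' : Fin n} {b b' : β} (ha : a' < a)
    (hab : Prec n β E k (inl a) (inr b)) (hE₁ : E a' b) (hE₂ : E a b') (hE₃ : ¬ E a b) :
    Prec n β E k (inr b') (inr b) := by
  rcases lt_trichotomy a (k b) with h | rfl | h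
  · exact TB ha h hE₁ hE₃ hE₂
  · exact absurd (hk b).1 hE₃
  · exact FB' hk hab h hE₂

end Rules

end Prec

section StickOrders

variable {n : ℕ} {β : Type} {E : Fin n → β → Prop} {k : β → Fin n}
  {r : (Fin n ⊕ β) → (Fin n ⊕ β) → Prop}

theorem IsStickOrder.rel_inr_inr_of_forbidden (hr : IsStickOrder n β E r) {a a' : Fin n}
    {b b' : β} (h₁ : r (inl a') (inl a)) (h₂ : r (inl a) (inr b)) (hE₁ : E a' b)
    (hE₂ : E a b') (hE₃ : ¬ E a b) : r (inr b') (inr b) := by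
  obtain ⟨_, -, hforb⟩ := hr
  rcases trichotomous_of r (inr b') (inr b) with h | h | h
  · exact h
  · cases h
    exact absurd hE₂ hE₃
  · exact absurd ⟨a, a', b, b', h₁, h₂, h, hE₁, hE₂, hE₃⟩ hforb

theorem IsAStickOrder.prec_le (hk : ∀ j : β, E (k j) j ∧ ∀ i : Fin n, E i j → i ≤ k j)
    (hr : IsAStickOrder n β E r) : Prec n β E k ≤ r := by
  obtain ⟨hst, hA⟩ := hr
  have := hst.1
  intro x y h
  induction h with
  | O hij => exact (hA _ _).2 hij
  | A hE => exact hst.2.1 _ _ hE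
  | @TB s t h j hst' htj hsj hntj hth =>
    exact hst.rel_inr_inr_of_forbidden ((hA s t).2 hst')
      (_root_.trans ((hA _ _).2 htj) (hst.2.1 _ _ (hk j).1)) hsj hth hntj
  | @FB t w h j _ hjt htw hth ih =>
    exact hst.rel_inr_inr_of_forbidden ((hA _ _).2 hjt) (_root_.trans (hst.2.1 _ _ htw) ih)
      (hk j).1 hth fun htj => absurd ((hk j).2 t htj) (not_le.2 hjt)
  | T _ _ ih₁ ih₂ => exact _root_.trans ih₁ ih₂

theorem isAStickOrder_of_prec_le (hk : ∀ j : β, E (k j) j ∧ ∀ i : Fin n, E i j → i ≤ k j)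
    (hr : IsStrictTotalOrder (Fin n ⊕ β) r) (hPr : Prec n β E k ≤ r)
    (hrP : ∀ a b, r (inl a) (inr b) → Prec n β E k (inl a) (inr b)) :
    IsAStickOrder n β E r := by
  have hA : ∀ i j, r (inl i) (inl j) ↔ i < j := fun i j =>
    ⟨fun h => lt_of_not_ge fun hji => by
      rcases hji.lt_or_eq with hji | rfl
      · exact asymm h (hPr _ _ (.O hji))
      · exact irrefl _ h,
     fun h => hPr _ _ (.O h)⟩
  refine ⟨⟨hr, fun a b hE => hPr _ _ (.A hE), ?_⟩, hA⟩
  rintro ⟨a, a', b, b', h₁, h₂, h₃, hE₁, hE₂, hE₃⟩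
  exact asymm h₃
    (hPr _ _ (Prec.inr_inr_of_forbidden hk ((hA _ _).1 h₁) (hrP _ _ h₂) hE₁ hE₂ hE₃))

end StickOrders

open Classical in
noncomputable def level {n : ℕ} {β : Type} (P : (Fin n ⊕ β) → (Fin n ⊕ β) → Prop) (b : β) : ℕ :=
  #{i | P (inl i) (inr b)}

/-- `b` sits just before the first `a_i` that is not `P`-below it. -/
noncomputable def key {n : ℕ} {β : Type} (P : (Fin n ⊕ β) → (Fin n ⊕ β) → Prop) :
    Fin n ⊕ β → ℕ :=
  Sum.elim (fun i => 2 * i + 1) (fun b => 2 * level P b)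

namespace Prec

variable {n : ℕ} {β : Type} {E : Fin n → β → Prop} {k : β → Fin n}

theorem lt_level_iff {i : Fin n} {b : β} :
    (i : ℕ) < level (Prec n β E k) b ↔ Prec n β E k (inl i) (inr b) := by
  classical
  rw [level, Fin.val_lt_card_iff_mem_of_isLowerSet, mem_filter]
  · exact and_iff_right (mem_univ i)
  · intro j j' hjj' hj'
    simpa using inl_inr_of_le hjj' (by simpa using hj')

theorem key_le_key {x y : Fin n ⊕ β} (h : Prec n β E k x y) :
    key (Prec n β E k) x ≤ key (Prec n β E k) y := by
  rcases x with i | b <;> rcases y with j | b'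
  · have := inl_inl_iff.1 h
    simp only [key, Sum.elim_inl]
    omega
  · have := lt_level_iff.2 h
    simp only [key, Sum.elim_inl, Sum.elim_inr]
    omega
  · exact absurd h not_inr_inl
  · simp only [key, Sum.elim_inr, level]
    exact Nat.mul_le_mul_left 2 (card_le_card fun i hi => by
      simp only [mem_filter, mem_univ, true_and] at hi ⊢
      exact T hi h)

theorem key_inr_lt_key_inl {a : Fin n} {b : β} (h : ¬ Prec n β E k (inl a) (inr b)) :
    key (Prec n β E k) (inr b) < key (Prec n β E k) (inl a) := by
  have := mt lt_level_iff.1 h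
  simp only [key, Sum.elim_inl, Sum.elim_inr]
  omega

theorem exists_isAStickOrder (hk : ∀ j : β, E (k j) j ∧ ∀ i : Fin n, E i j → i ≤ k j)
    (hirr : ∀ c, ¬ Prec n β E k c c) : ∃ r, IsAStickOrder n β E r := by
  let R x y := key (Prec n β E k) x < key (Prec n β E k) y ∨ Prec n β E k x y
  have : IsStrictOrder _ R :=
    { irrefl := fun x hx => hx.elim (lt_irrefl _) (hirr x)
      trans := by
        rintro x y z (hxy | hxy) (hyz | hyz)
        · exact Or.inl (hxy.trans hyz)
        · exact Or.inl (hxy.trans_le (key_le_key hyz))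
        · exact Or.inl ((key_le_key hxy).trans_lt hyz)
        · exact Or.inr (T hxy hyz) }
  obtain ⟨r, hr, hRr⟩ := exists_isStrictTotalOrder_le R
  refine ⟨r, isAStickOrder_of_prec_le hk hr (fun x y h => hRr _ _ (Or.inr h)) fun a b hab => ?_⟩
  by_contra h
  exact asymm hab (hRr _ _ (Or.inl (key_inr_lt_key_inl h)))

end Prec

theorem stmt7_general (n : ℕ) (β : Type) (E : Fin n → β → Prop) (k : β → Fin n)
    (hk : ∀ j : β, E (k j) j ∧ ∀ i : Fin n, E i j → i ≤ k j) :
    (∃ r, IsAStickOrder n β E r) ↔ ∀ c : Fin n ⊕ β, ¬ Prec n β E k c c :=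
  ⟨fun ⟨_, hr⟩ c hc => hr.1.1.irrefl c (hr.prec_le hk c c hc), Prec.exists_isAStickOrder hk⟩

/-- `G` admits an A-Stick order iff the relation `≺°` generated by the
rules (O),(A),(TB),(FB),(T) is irreflexive (i.e. is a strict partial order). -/
theorem stmt7 (n : ℕ) (β : Type) [Fintype β] (E : Fin n → β → Prop) (k : β → Fin n)
    (hk : ∀ j : β, E (k j) j ∧ ∀ i : Fin n, E i j → i ≤ k j) :
    (∃ r, IsAStickOrder n β E r) ↔ ∀ c : Fin n ⊕ β, ¬ Prec n β E k c c :=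
  stmt7_general n β E k hk
end

section
/- If G is an A-Stick N-overlap graph, then G has exactly one canonical order. -/
open Sum

/-- A canonical order for `G` (with `m j = max {i | a_i ≺° b_j}` given as a parameter):
a linear (strict total) order on `A ∪ B` extending `≺°` in which every `b_j` is
left-optimal, i.e. `a_{m_j} ≺ b_j` and `b_j ≺ a_{m_j + 1}` whenever `m_j < n`. -/
def IsCanonicalOrder (n : ℕ) (β : Type) (E : Fin n → β → Prop) (k : β → Fin n)
    (m : β → Fin n) (r : (Fin n ⊕ β) → (Fin n ⊕ β) → Prop) : Prop :=
  IsStrictTotalOrder (Fin n ⊕ β) r ∧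
  (∀ c d : Fin n ⊕ β, Prec n β E k c d → r c d) ∧
  ∀ j : β, r (inl (m j)) (inr j) ∧
    ∀ hlt : (m j : ℕ) + 1 < n, r (inr j) (inl ⟨(m j : ℕ) + 1, hlt⟩)
/-- `G` is an N-overlap graph: for all distinct `b_s, b_t ∈ B`, neither `N(b_s) ⊆ N(b_t)`
nor `N(b_t) ⊆ N(b_s)`. -/
def NOverlap (n : ℕ) (β : Type) (E : Fin n → β → Prop) : Prop :=
  ∀ s t : β, s ≠ t → ¬ ∀ a : Fin n, E a s → E a t


/-! Every canonical order puts `a_i` at rank `2i` and `b_j` at rank `2 m_j + 1`, so two canonical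
orders can only differ on a pair `b_j, b_h` with `m_j = m_h`. For such a pair the N-overlap
property gives `a_t ∈ N(b_h) \ N(b_j)` and `a_s ∈ N(b_j) \ N(b_h)`; if `b_j, b_h` were
`≺°`-incomparable, rule (TB) and the closure of rule (FB) would force both `t < s` and `s < t`.
Hence the only candidate is the rank order refined by `≺°`, and it is a strict total order
because `≺°` is contained in any A-Stick order and is therefore irreflexive. -/

/-- `b_j` is placed between `a_{m j}` and `a_{m j + 1}`. -/
def canonicalRank {n : ℕ} {β : Type} (m : β → Fin n) : Fin n ⊕ β → ℕ
  | inl i => 2 * i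
  | inr j => 2 * m j + 1

def canonicalOrder (n : ℕ) (β : Type) (E : Fin n → β → Prop) (k m : β → Fin n)
    (c d : Fin n ⊕ β) : Prop :=
  canonicalRank m c < canonicalRank m d ∨
    canonicalRank m c = canonicalRank m d ∧ Prec n β E k c d

theorem eq_of_trichotomous_of_le {α : Type*} {r s : α → α → Prop} [IsStrictOrder α r]
    (hs : ∀ a b, s a b ∨ a = b ∨ s b a) (hsr : ∀ a b, s a b → r a b) : r = s := by
  funext a b
  refine propext ⟨fun hab => ?_, hsr a b⟩
  rcases hs a b with h | rfl | h
  · exact h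
  · exact absurd hab (irrefl a)
  · exact absurd (hsr b a h) (asymm hab)

section Prec

variable {n : ℕ} {β : Type} {E : Fin n → β → Prop} {k : β → Fin n} {m : β → Fin n}
  {r : Fin n ⊕ β → Fin n ⊕ β → Prop}

local notation:50 c:51 " ≺° " d:51 => Prec n β E k c d

theorem Prec.isRight_of_isRight {c d : Fin n ⊕ β} (h : c ≺° d) (hc : c.isRight) :
    d.isRight := by
  induction h with
  | O | A => simp at hc
  | TB | FB => rfl
  | T _ _ ih₁ ih₂ => exact ih₂ (ih₁ hc)

theorem Prec.not_inr_inl_s15 {j : β} {i : Fin n} : ¬ inr j ≺° inl i :=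
  fun h => by simpa using h.isRight_of_isRight rfl

theorem Prec.lt_of_inl_inl {i i' : Fin n} (h : inl i ≺° inl i') : i < i' := by
  generalize hc : (inl i : Fin n ⊕ β) = c at h
  generalize hd : (inl i' : Fin n ⊕ β) = d at h
  induction h generalizing i i' with
  | O hlt => cases hc; cases hd; exact hlt
  | A | TB | FB => simp at hc hd
  | @T _ q _ h₁ h₂ ih₁ ih₂ =>
    subst hc hd
    rcases q with u | v
    · exact (ih₁ rfl rfl).trans (ih₂ rfl rfl)
    · exact absurd h₂ Prec.not_inr_inl_s15

theorem Prec.exists_le_k_of_inl_inr (hk : ∀ j, IsGreatest {i | E i j} (k j)) {i : Fin n}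
    {j : β} (h : inl i ≺° inr j) : ∃ w, (w = j ∨ inr w ≺° inr j) ∧ i ≤ k w := by
  generalize hc : (inl i : Fin n ⊕ β) = c at h
  generalize hd : (inr j : Fin n ⊕ β) = d at h
  induction h generalizing i j with
  | O | TB | FB => simp at hc hd
  | A hE => cases hc; cases hd; exact ⟨_, Or.inl rfl, (hk _).2 hE⟩
  | @T _ q _ h₁ h₂ ih₁ ih₂ =>
    subst hc hd
    rcases q with u | v
    · obtain ⟨w, hw, huw⟩ := ih₂ rfl rfl
      exact ⟨w, hw, (Prec.lt_of_inl_inl h₁).le.trans huw⟩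
    · obtain ⟨w, rfl | hw, hiw⟩ := ih₁ rfl rfl
      · exact ⟨w, Or.inr h₂, hiw⟩
      · exact ⟨w, Or.inr (hw.T h₂), hiw⟩

theorem Prec.tb_of_le (hk : ∀ j, IsGreatest {i | E i j} (k j)) {s t : Fin n} {h j : β}
    (hst : s < t) (htk : t ≤ k j) (hsj : E s j) (htj : ¬ E t j) (hth : E t h) :
    inr h ≺° inr j :=
  Prec.TB hst (htk.lt_of_ne fun he => htj (he ▸ (hk j).1)) hsj htj hth

/-- Rule (FB) with `E t w` weakened to `t ≤ k w`. -/
theorem Prec.fb_of_le (hk : ∀ j, IsGreatest {i | E i j} (k j)) {w j b : β} {t : Fin n}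
    (hwj : inr w ≺° inr j) (hjt : k j < t) (htw : t ≤ k w) (htb : E t b) :
    inr b ≺° inr j := by
  generalize hc : (inr w : Fin n ⊕ β) = c at hwj
  generalize hd : (inr j : Fin n ⊕ β) = d at hwj
  induction hwj generalizing w j t with
  | O | A => simp at hc
  | @TB s t₀ h₀ _ hst hk₀ hsj hnt hth =>
    cases hc; cases hd
    by_cases htw' : E t h₀
    · exact Prec.FB (Prec.TB hst hk₀ hsj hnt hth) hjt htw' htb
    · exact (Prec.tb_of_le hk (hk₀.trans hjt) htw hth htw' htb).T (Prec.TB hst hk₀ hsj hnt hth)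
  | @FB t₀ w₀ h₀ _ hwj hk₀ htw₀ hth ih =>
    cases hc; cases hd
    by_cases htw' : E t h₀
    · exact Prec.FB (Prec.FB hwj hk₀ htw₀ hth) hjt htw' htb
    rcases lt_trichotomy t₀ t with hlt | rfl | hlt
    · exact (Prec.tb_of_le hk hlt htw hth htw' htb).T (Prec.FB hwj hk₀ htw₀ hth)
    · exact absurd hth htw'
    · exact ih hjt (hlt.le.trans ((hk w₀).2 htw₀)) htb rfl rfl
  | @T _ q _ h₁ h₂ ih₁ ih₂ =>
    subst hc hd
    obtain ⟨u, rfl⟩ := Sum.isRight_iff.mp (h₁.isRight_of_isRight rfl)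
    rcases le_or_gt t (k u) with hle | hlt
    · exact ih₂ hjt hle htb rfl rfl
    · exact (ih₁ hlt htw htb rfl rfl).T h₂

theorem Prec.inr_inr_of_k_lt_of_le_m (hk : ∀ j, IsGreatest {i | E i j} (k j))
    (hm : ∀ j, IsGreatest {i | inl i ≺° inr j} (m j)) {j b : β} {t : Fin n}
    (hjt : k j < t) (htm : t ≤ m j) (htb : E t b) : inr b ≺° inr j := by
  have htj : inl t ≺° inr j := by
    rcases htm.lt_or_eq with hlt | rfl
    · exact (Prec.O hlt).T (hm j).1
    · exact (hm j).1
  obtain ⟨w, rfl | hwj, htw⟩ := htj.exists_le_k_of_inl_inr hk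
  · exact absurd htw hjt.not_ge
  · exact hwj.fb_of_le hk hjt htw htb

theorem lt_of_not_prec (hk : ∀ j, IsGreatest {i | E i j} (k j))
    (hm : ∀ j, IsGreatest {i | inl i ≺° inr j} (m j)) {h j : β} {s t : Fin n}
    (hhj : ¬ inr h ≺° inr j) (hm_le : m h ≤ m j) (hth : E t h) (htj : ¬ E t j)
    (hsj : E s j) : t < s := by
  have htm : t ≤ m j := ((hk h).2 hth).trans (((hm h).2 (Prec.A (hk h).1)).trans hm_le)
  have htk : t < k j := by
    refine lt_of_le_of_ne ?_ fun he => htj (he ▸ (hk j).1)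
    exact le_of_not_gt fun hlt => hhj (Prec.inr_inr_of_k_lt_of_le_m hk hm hlt htm hth)
  refine lt_of_le_of_ne ?_ fun he => htj (he ▸ hsj)
  exact le_of_not_gt fun hlt => hhj (Prec.TB hlt htk hsj htj hth)

theorem prec_or_prec_of_m_eq (hk : ∀ j, IsGreatest {i | E i j} (k j))
    (hm : ∀ j, IsGreatest {i | inl i ≺° inr j} (m j)) (hN : NOverlap n β E) {j h : β}
    (hne : j ≠ h) (hmeq : m j = m h) : inr j ≺° inr h ∨ inr h ≺° inr j := by
  by_contra! hno
  obtain ⟨t, hth, htj⟩ : ∃ t, E t h ∧ ¬ E t j := by simpa using hN h j hne.symm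
  obtain ⟨s, hsj, hsh⟩ : ∃ s, E s j ∧ ¬ E s h := by simpa using hN j h hne
  exact (lt_of_not_prec hk hm hno.2 hmeq.ge hth htj hsj).asymm
    (lt_of_not_prec hk hm hno.1 hmeq.le hsj hsh hth)

theorem Prec.rank_le (hm : ∀ j, IsGreatest {i | inl i ≺° inr j} (m j)) {c d : Fin n ⊕ β}
    (h : c ≺° d) : canonicalRank m c ≤ canonicalRank m d := by
  rcases c with i | j <;> rcases d with i' | j' <;> simp only [canonicalRank]
  · have := Fin.lt_def.mp h.lt_of_inl_inl; omega
  · have := Fin.le_def.mp ((hm j').2 h); omega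
  · exact absurd h Prec.not_inr_inl_s15
  · have := Fin.le_def.mp ((hm j').2 ((hm j).1.T h)); omega

theorem IsAStickOrder.rel_of_not_adj (hr : IsAStickOrder n β E r) {a a' : Fin n} {b b' : β}
    (ha : a' < a) (hab : r (inl a) (inr b)) (ha'b : E a' b) (hab' : E a b') (hnab : ¬ E a b) :
    r (inr b') (inr b) := by
  obtain ⟨⟨hsto, -, hforb⟩, hord⟩ := hr
  by_contra hb'b
  have hbb' : ¬ r (inr b) (inr b') := fun h =>
    hforb ⟨a, a', b, b', (hord a' a).mpr ha, hab, h, ha'b, hab', hnab⟩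
  obtain rfl : b' = b := inr_injective (hsto.trichotomous _ _ hb'b hbb')
  exact hnab hab'

theorem IsAStickOrder.rel_of_prec (hk : ∀ j, IsGreatest {i | E i j} (k j))
    (hr : IsAStickOrder n β E r) {c d : Fin n ⊕ β}
    (h : c ≺° d) : r c d := by
  have hedge := hr.1.2.1
  have htrans := hr.1.1.trans
  induction h with
  | O hlt => exact (hr.2 _ _).mpr hlt
  | A hE => exact hedge _ _ hE
  | TB hst htk hsj htj hth =>
    exact hr.rel_of_not_adj hst (htrans _ _ _ ((hr.2 _ _).mpr htk) (hedge _ _ (hk _).1))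
      hsj hth htj
  | FB _ hkt htw hth ih =>
    exact hr.rel_of_not_adj hkt (htrans _ _ _ (hedge _ _ htw) ih) (hk _).1 hth
      fun hE => hkt.not_ge ((hk _).2 hE)
  | T _ _ ih₁ ih₂ => exact htrans _ _ _ ih₁ ih₂

theorem Prec.irrefl_of_isAStickOrder (hk : ∀ j, IsGreatest {i | E i j} (k j))
    (hr : IsAStickOrder n β E r) (c : Fin n ⊕ β) :
    ¬ c ≺° c :=
  fun h => hr.1.1.irrefl c (hr.rel_of_prec hk h)

theorem IsCanonicalOrder.rel_inl_inr (hc : IsCanonicalOrder n β E k m r) {i : Fin n} {j : β}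
    (h : i ≤ m j) : r (inl i) (inr j) := by
  rcases h.lt_or_eq with hlt | rfl
  · exact hc.1.trans _ _ _ (hc.2.1 _ _ (Prec.O hlt)) (hc.2.2 j).1
  · exact (hc.2.2 j).1

theorem IsCanonicalOrder.rel_inr_inl (hc : IsCanonicalOrder n β E k m r) {i : Fin n} {j : β}
    (h : m j < i) : r (inr j) (inl i) := by
  have hlt : (m j : ℕ) + 1 < n := by omega
  have hsucc : (⟨m j + 1, hlt⟩ : Fin n) ≤ i := Fin.le_def.mpr h
  rcases hsucc.lt_or_eq with hlt' | he
  · exact hc.1.trans _ _ _ ((hc.2.2 j).2 hlt) (hc.2.1 _ _ (Prec.O hlt'))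
  · exact he ▸ (hc.2.2 j).2 hlt

theorem IsCanonicalOrder.rel_of_rank_lt (hc : IsCanonicalOrder n β E k m r)
    {c d : Fin n ⊕ β} (h : canonicalRank m c < canonicalRank m d) : r c d := by
  rcases c with i | j <;> rcases d with i' | j' <;> simp only [canonicalRank] at h
  · exact hc.2.1 _ _ (Prec.O (Fin.lt_def.mpr (by omega)))
  · exact hc.rel_inl_inr (Fin.le_def.mpr (by omega))
  · exact hc.rel_inr_inl (Fin.lt_def.mpr (by omega))
  · have hlt : (m j : ℕ) + 1 < n := by omega
    exact hc.1.trans _ _ _ ((hc.2.2 j).2 hlt)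
      (hc.rel_inl_inr (Fin.le_def.mpr (by simp only; omega)))

theorem IsCanonicalOrder.rel_of_canonicalOrder (hc : IsCanonicalOrder n β E k m r)
    {c d : Fin n ⊕ β} (h : canonicalOrder n β E k m c d) : r c d :=
  h.elim hc.rel_of_rank_lt fun h => hc.2.1 _ _ h.2

theorem canonicalOrder_trichotomous (hk : ∀ j, IsGreatest {i | E i j} (k j))
    (hm : ∀ j, IsGreatest {i | inl i ≺° inr j} (m j)) (hN : NOverlap n β E)
    (c d : Fin n ⊕ β) :
    canonicalOrder n β E k m c d ∨ c = d ∨ canonicalOrder n β E k m d c := by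
  rcases lt_trichotomy (canonicalRank m c) (canonicalRank m d) with h | h | h
  · exact Or.inl (Or.inl h)
  · rcases c with i | j <;> rcases d with i' | j'
    · exact Or.inr (Or.inl (congrArg inl (Fin.ext (by simp only [canonicalRank] at h; omega))))
    · simp only [canonicalRank] at h; omega
    · simp only [canonicalRank] at h; omega
    obtain rfl | hne := eq_or_ne j j'
    · exact Or.inr (Or.inl rfl)
    have hmeq : m j = m j' := Fin.ext (by simp only [canonicalRank] at h; omega)
    rcases prec_or_prec_of_m_eq hk hm hN hne hmeq with hp | hp
    · exact Or.inl (Or.inr ⟨h, hp⟩)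
    · exact Or.inr (Or.inr (Or.inr ⟨h.symm, hp⟩))
  · exact Or.inr (Or.inr (Or.inl h))

theorem isCanonicalOrder_canonicalOrder (hk : ∀ j, IsGreatest {i | E i j} (k j))
    (hm : ∀ j, IsGreatest {i | inl i ≺° inr j} (m j)) (hN : NOverlap n β E)
    (hA : ∃ r, IsAStickOrder n β E r) :
    IsCanonicalOrder n β E k m (canonicalOrder n β E k m) := by
  obtain ⟨r₀, hr₀⟩ := hA
  refine ⟨{ trichotomous := ?_, irrefl := ?_, trans := ?_ }, fun c d h => ?_,
    fun j => ⟨?_, ?_⟩⟩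
  · exact fun c d h₁ h₂ =>
      ((canonicalOrder_trichotomous hk hm hN c d).resolve_left h₁).resolve_right h₂
  · exact fun c h => h.elim (lt_irrefl _) fun h => Prec.irrefl_of_isAStickOrder hk hr₀ c h.2
  · rintro c d e (hcd | ⟨hcd, hcd'⟩) (hde | ⟨hde, hde'⟩)
    · exact Or.inl (hcd.trans hde)
    · exact Or.inl (hcd.trans_eq hde)
    · exact Or.inl (hcd.trans_lt hde)
    · exact Or.inr ⟨hcd.trans hde, hcd'.T hde'⟩
  · exact (h.rank_le hm).lt_or_eq.imp_right fun he => ⟨he, h⟩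
  · exact Or.inl (by simp [canonicalRank])
  · exact fun _ => Or.inl (by simp only [canonicalRank]; omega)

theorem IsCanonicalOrder.eq_canonicalOrder (hk : ∀ j, IsGreatest {i | E i j} (k j))
    (hm : ∀ j, IsGreatest {i | inl i ≺° inr j} (m j)) (hN : NOverlap n β E)
    (hc : IsCanonicalOrder n β E k m r) : r = canonicalOrder n β E k m :=
  haveI := hc.1
  eq_of_trichotomous_of_le (canonicalOrder_trichotomous hk hm hN)
    fun _ _ => hc.rel_of_canonicalOrder

end Prec

theorem stmt15_general (n : ℕ) (β : Type) (E : Fin n → β → Prop) (k : β → Fin n)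
    (hk : ∀ j : β, E (k j) j ∧ ∀ i : Fin n, E i j → i ≤ k j)
    (m : β → Fin n)
    (hm : ∀ j : β, Prec n β E k (inl (m j)) (inr j) ∧
      ∀ i : Fin n, Prec n β E k (inl i) (inr j) → i ≤ m j)
    (hA : ∃ r, IsAStickOrder n β E r)
    (hN : NOverlap n β E) :
    ∃! r : (Fin n ⊕ β) → (Fin n ⊕ β) → Prop, IsCanonicalOrder n β E k m r :=
  ⟨canonicalOrder n β E k m, isCanonicalOrder_canonicalOrder hk hm hN hA,
    fun _ hr => hr.eq_canonicalOrder hk hm hN⟩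

/-- If `G` is an A-Stick N-overlap graph, then `G` has exactly one
canonical order. -/
theorem stmt15 (n : ℕ) (β : Type) [Fintype β] (E : Fin n → β → Prop) (k : β → Fin n)
    (hk : ∀ j : β, E (k j) j ∧ ∀ i : Fin n, E i j → i ≤ k j)
    (m : β → Fin n)
    (hm : ∀ j : β, Prec n β E k (inl (m j)) (inr j) ∧
      ∀ i : Fin n, Prec n β E k (inl i) (inr j) → i ≤ m j)
    (hA : ∃ r, IsAStickOrder n β E r)
    (hN : NOverlap n β E) :
    ∃! r : (Fin n ⊕ β) → (Fin n ⊕ β) → Prop, IsCanonicalOrder n β E k m r :=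
  stmt15_general n β E k hk m hm hA hN
end
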